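/- Let f: M → S^n ⊂ ℝ^{n+1} be a map into the unit sphere whose coordinate functions f^i satisfy Δ_g f^i = λ f^i for a common eigenvalue λ of the Laplacian of a metric g on M, and suppose g₀ = e^{2u} g is a conformal metric with Δ_{g₀} f^i = m f^i for all i, where m = dim M > 2 and λ = m. If additionally the conformal change formula Δ_{g₀} φ = e^{−2u}(Δ_g φ + (m−2) g^{kl} ∂_k u ∂_l φ) holds, then m f^i (e^{2u} − 1) = (m − 2) g^{kl} ∂_k u ∂_l f^i for each i; summing against f^i and using Σ_i (f^i)² = 1 yields u ≡ 0. -/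

import Mathlib

open Real

/-- Partial derivative in direction `i` of a function on `ℝ^m` (local coordinates). -/
noncomputable def pderiv' (m : ℕ) (f : (Fin m → ℝ) → ℝ) (i : Fin m) (x : Fin m → ℝ) : ℝ :=
  fderiv ℝ f x (Pi.single i 1)

/-- The Laplace–Beltrami operator of a metric `h` in local coordinates. -/
noncomputable def coordLaplacian (m : ℕ) (h : (Fin m → ℝ) → Matrix (Fin m) (Fin m) ℝ)
    (φ : (Fin m → ℝ) → ℝ) (x : Fin m → ℝ) : ℝ :=
  -(1 / Real.sqrt (h x).det) *
    ∑ i, pderiv' m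
      (fun y => Real.sqrt (h y).det * ∑ j, (h y)⁻¹ i j * pderiv' m φ j y) i x

/-- Orthogonality: `Σ_i f^i ∂_l f^i = ½ ∂_l (Σ_i (f^i)²) = 0`. -/
theorem sphere_orth (m n : ℕ)
    (f : Fin (n + 1) → (Fin m → ℝ) → ℝ) (hf : ∀ i, ContDiff ℝ (⊤ : ℕ∞) (f i))
    (hsphere : ∀ x, ∑ i, (f i x) ^ 2 = 1)
    (x : Fin m → ℝ) (l : Fin m) :
    ∑ i, f i x * pderiv' m (f i) l x = 0 := by
  have hd : HasFDerivAt (fun y => ∑ i, (f i y)^2)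
      (∑ i, ((2:ℝ) * f i x) • fderiv ℝ (f i) x) x := by
    apply HasFDerivAt.fun_sum
    intro i _
    have h := ((hf i).differentiable (by simp) x).hasFDerivAt
    have h2 := h.fun_mul h
    have heq : ((2:ℝ) * f i x) • fderiv ℝ (f i) x
        = f i x • fderiv ℝ (f i) x + f i x • fderiv ℝ (f i) x := by
      rw [two_mul, add_smul]
    rw [heq]
    simpa [pow_two] using h2
  have hconst : (fun y => ∑ i, (f i y)^2) = fun _ => (1:ℝ) := funext hsphere
  rw [hconst] at hd
  have h0 : (∑ i, ((2:ℝ) * f i x) • fderiv ℝ (f i) x)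
      = (0 : (Fin m → ℝ) →L[ℝ] ℝ) := hd.unique (hasFDerivAt_const 1 x)
  have h1 := congrArg (fun L : (Fin m → ℝ) →L[ℝ] ℝ => L (Pi.single l 1)) h0
  simp only [ContinuousLinearMap.coe_sum', Finset.sum_apply,
    ContinuousLinearMap.coe_smul', Pi.smul_apply, smul_eq_mul,
    ContinuousLinearMap.zero_apply] at h1
  have h2 : ∑ i, (2:ℝ) * f i x * fderiv ℝ (f i) x (Pi.single l 1)
      = 2 * ∑ i, f i x * fderiv ℝ (f i) x (Pi.single l 1) := by
    rw [Finset.mul_sum]; exact Finset.sum_congr rfl fun i _ => by ring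
  rw [h2] at h1
  unfold pderiv'
  linarith

/-- If the coordinate functions `f^i` of a map into `S^n` are eigenfunctions of
`Δ_g` to eigenvalue `λ = m` and of `Δ_{g₀}` (with `g₀ = e^{2u} g`, `m > 2`) to
eigenvalue `m`, then `m f^i (e^{2u} − 1) = (m−2) g^{kl} ∂_k u ∂_l f^i`, and
summing against `f^i` using `Σ (f^i)² = 1` yields `u ≡ 0`. -/
theorem conformal_eigenfunctions_rigidity (m n : ℕ) (hm : 2 < m)
    (g : (Fin m → ℝ) → Matrix (Fin m) (Fin m) ℝ)
    (hgpos : ∀ x, (g x).PosDef) (hgsmooth : ∀ i j, ContDiff ℝ (⊤ : ℕ∞) (fun x => g x i j))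
    (u : (Fin m → ℝ) → ℝ) (hu : ContDiff ℝ (⊤ : ℕ∞) u)
    (g₀ : (Fin m → ℝ) → Matrix (Fin m) (Fin m) ℝ)
    (hg₀ : ∀ x, g₀ x = Real.exp (2 * u x) • g x)
    (f : Fin (n + 1) → (Fin m → ℝ) → ℝ) (hf : ∀ i, ContDiff ℝ (⊤ : ℕ∞) (f i))
    (hsphere : ∀ x, ∑ i, (f i x) ^ 2 = 1)
    (heig : ∀ i x, coordLaplacian m g (f i) x = (m : ℝ) * f i x)
    (heig₀ : ∀ i x, coordLaplacian m g₀ (f i) x = (m : ℝ) * f i x)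
    (hconf : ∀ (φ : (Fin m → ℝ) → ℝ), ContDiff ℝ (⊤ : ℕ∞) φ → ∀ x,
      coordLaplacian m g₀ φ x =
        Real.exp (-(2 * u x)) * (coordLaplacian m g φ x +
          ((m : ℝ) - 2) * ∑ k, ∑ l, (g x)⁻¹ k l * pderiv' m u k x * pderiv' m φ l x)) :
    (∀ i x, (m : ℝ) * f i x * (Real.exp (2 * u x) - 1) =
      ((m : ℝ) - 2) * ∑ k, ∑ l, (g x)⁻¹ k l * pderiv' m u k x * pderiv' m (f i) l x) ∧
    (∀ x, u x = 0) := by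
  have key : ∀ i x, (m : ℝ) * f i x * (Real.exp (2 * u x) - 1) =
      ((m : ℝ) - 2) * ∑ k, ∑ l, (g x)⁻¹ k l * pderiv' m u k x * pderiv' m (f i) l x := by
    intro i x
    have h1 := hconf (f i) (hf i) x
    rw [heig₀ i x, heig i x, Real.exp_neg] at h1
    have hne : Real.exp (2 * u x) ≠ 0 := (Real.exp_pos _).ne'
    set S := ∑ k, ∑ l, (g x)⁻¹ k l * pderiv' m u k x * pderiv' m (f i) l x with hS
    have h3 : Real.exp (2 * u x) * ((m : ℝ) * f i x)
        = (m : ℝ) * f i x + ((m : ℝ) - 2) * S := by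
      conv_lhs => rw [h1]
      rw [← mul_assoc, mul_inv_cancel₀ hne, one_mul]
    linarith
  refine ⟨key, fun x => ?_⟩
  have horth : ∀ l, ∑ i, f i x * pderiv' m (f i) l x = 0 :=
    fun l => sphere_orth m n f hf hsphere x l
  have h2 : ∑ i, f i x * ((m : ℝ) * f i x * (Real.exp (2 * u x) - 1))
      = ∑ i, f i x * (((m : ℝ) - 2) *
          ∑ k, ∑ l, (g x)⁻¹ k l * pderiv' m u k x * pderiv' m (f i) l x) :=
    Finset.sum_congr rfl fun i _ => by rw [key i x]
  have hL : ∑ i, f i x * ((m : ℝ) * f i x * (Real.exp (2 * u x) - 1))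
      = (m : ℝ) * (Real.exp (2 * u x) - 1) := by
    have heq : ∀ i, f i x * ((m : ℝ) * f i x * (Real.exp (2 * u x) - 1))
        = ((m : ℝ) * (Real.exp (2 * u x) - 1)) * (f i x)^2 := fun i => by ring
    simp_rw [heq, ← Finset.mul_sum, hsphere x, mul_one]
  have hR : ∑ i, f i x * (((m : ℝ) - 2) *
      ∑ k, ∑ l, (g x)⁻¹ k l * pderiv' m u k x * pderiv' m (f i) l x) = 0 := by
    have heq : ∀ i, f i x * (((m : ℝ) - 2) *
        ∑ k, ∑ l, (g x)⁻¹ k l * pderiv' m u k x * pderiv' m (f i) l x)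
        = ∑ k, ∑ l, ((m : ℝ) - 2) * ((g x)⁻¹ k l * pderiv' m u k x)
            * (f i x * pderiv' m (f i) l x) := by
      intro i
      rw [Finset.mul_sum, Finset.mul_sum]
      refine Finset.sum_congr rfl fun k _ => ?_
      rw [Finset.mul_sum, Finset.mul_sum]
      exact Finset.sum_congr rfl fun l _ => by ring
    simp_rw [heq]
    rw [Finset.sum_comm]
    refine Finset.sum_eq_zero fun k _ => ?_
    rw [Finset.sum_comm]
    refine Finset.sum_eq_zero fun l _ => ?_
    rw [← Finset.mul_sum, horth l, mul_zero]
  have hzero : (m : ℝ) * (Real.exp (2 * u x) - 1) = 0 := by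
    rw [← hL, h2, hR]
  have hmne : (m : ℝ) ≠ 0 := by positivity
  have hexp : Real.exp (2 * u x) = 1 := by
    have := mul_eq_zero.mp hzero
    rcases this with h | h
    · exact absurd h hmne
    · linarith
  have h2u := congrArg Real.log hexp
  rw [Real.log_exp, Real.log_one] at h2u
  linarith
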